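/- arXiv:physics/0505034 — 2 statements merged into one kernel-verified Lean document; each statement's English description precedes it below -/
import Mathlib

section
/- Let P be a set of generators and p ∈ P. Then p is ≺-minimal in P if and only if there exists a cost function K for generators that attains its minimum over P at p, i.e. K(L p, T p) ≤ K(L p', T p') for all p' ∈ P. -/
/-!
A cost function strictly monotone in each argument makes every `p' ≺ p` strictly cheaper than `p`,
so a cost minimiser is `≺`-minimal. Conversely, for a `≺`-minimal `p` take the cost
`l + t`, plus a penalty of `L p + T p` on every `(l, t)` with `L p < l` or `T p < t`: the penalised
generators cost at least as much as `p`, and any other `p' ∈ P` satisfies `p' ⪯ p`, hence `p ⪯ p'`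
by minimality.
-/

open scoped NNReal

/-- `⪯` for generators: cheaper or equal in both length and time. -/
def genLE {X : Type*} (L : X → ℕ) (T : X → ℝ≥0) (p₁ p₂ : X) : Prop :=
  L p₁ ≤ L p₂ ∧ T p₁ ≤ T p₂

/-- `≺` for generators: always cheaper. -/
def genLT {X : Type*} (L : X → ℕ) (T : X → ℝ≥0) (p₁ p₂ : X) : Prop :=
  genLE L T p₁ p₂ ∧ ¬ genLE L T p₂ p₁

/-- A cost function for generators: strictly monotone in each argument. -/
def IsGenCostFunction (K : ℕ → ℝ≥0 → ℝ≥0) : Prop :=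
  (∀ l l' t, l < l' → K l t < K l' t) ∧ (∀ l t t', t < t' → K l t < K l t')

/-- `p` is `≺`-minimal in `P`. -/
def GenMinimal {X : Type*} (L : X → ℕ) (T : X → ℝ≥0) (P : Set X) (p : X) : Prop :=
  p ∈ P ∧ ¬ ∃ p' ∈ P, genLT L T p' p

namespace IsGenCostFunction

variable {K : ℕ → ℝ≥0 → ℝ≥0}

theorem strictMono_left (hK : IsGenCostFunction K) (t : ℝ≥0) : StrictMono fun l => K l t :=
  fun _ _ h => hK.1 _ _ t h

theorem strictMono_right (hK : IsGenCostFunction K) (l : ℕ) : StrictMono (K l) :=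
  fun _ _ h => hK.2 l _ _ h

theorem le_of_le (hK : IsGenCostFunction K) {l l' : ℕ} {t t' : ℝ≥0} (hl : l ≤ l') (ht : t ≤ t') :
    K l t ≤ K l' t' :=
  ((hK.strictMono_left t).monotone hl).trans ((hK.strictMono_right l').monotone ht)

theorem lt_of_genLT (hK : IsGenCostFunction K) {X : Type*} {L : X → ℕ} {T : X → ℝ≥0} {p p' : X}
    (h : genLT L T p' p) : K (L p') (T p') < K (L p) (T p) := by
  obtain ⟨⟨hl, ht⟩, hnot⟩ := h
  rcases not_and_or.mp hnot with hl' | ht'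
  · calc K (L p') (T p') ≤ K (L p') (T p) := hK.le_of_le le_rfl ht
      _ < K (L p) (T p) := hK.strictMono_left _ (not_le.mp hl')
  · calc K (L p') (T p') < K (L p') (T p) := hK.strictMono_right _ (not_le.mp ht')
      _ ≤ K (L p) (T p) := hK.le_of_le hl le_rfl

end IsGenCostFunction

theorem GenMinimal.genLE_of_genLE {X : Type*} {L : X → ℕ} {T : X → ℝ≥0} {P : Set X} {p p' : X}
    (h : GenMinimal L T P p) (hp' : p' ∈ P) (hle : genLE L T p' p) : genLE L T p p' :=
  by_contra fun hn => h.2 ⟨p', hp', hle, hn⟩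

noncomputable def penalizedCost (l₀ : ℕ) (t₀ : ℝ≥0) (l : ℕ) (t : ℝ≥0) : ℝ≥0 :=
  l + t + if l₀ < l ∨ t₀ < t then (l₀ + t₀ : ℝ≥0) else 0

section penalizedCost

variable {l₀ : ℕ} {t₀ : ℝ≥0}

theorem penalty_mono {l l' : ℕ} {t t' : ℝ≥0} (hl : l ≤ l') (ht : t ≤ t') :
    (if l₀ < l ∨ t₀ < t then (l₀ + t₀ : ℝ≥0) else 0) ≤
      if l₀ < l' ∨ t₀ < t' then (l₀ + t₀ : ℝ≥0) else 0 := by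
  split_ifs with h h'
  · exact le_rfl
  · exact absurd (h.imp (·.trans_le hl) (·.trans_le ht)) h'
  · positivity
  · exact le_rfl

theorem isGenCostFunction_penalizedCost : IsGenCostFunction (penalizedCost l₀ t₀) := by
  refine ⟨fun l l' t hl => ?_, fun l t t' ht => ?_⟩
  · exact add_lt_add_of_lt_of_le (add_lt_add_left (by exact_mod_cast hl) _)
      (penalty_mono hl.le le_rfl)
  · exact add_lt_add_of_lt_of_le (add_lt_add_right ht _) (penalty_mono le_rfl ht.le)

theorem penalizedCost_self_le {l : ℕ} {t : ℝ≥0} (h : l₀ < l ∨ t₀ < t) :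
    penalizedCost l₀ t₀ l₀ t₀ ≤ penalizedCost l₀ t₀ l t := by
  simp [penalizedCost, h]

end penalizedCost

theorem generator_minimal_iff_cost_min {X : Type*} (L : X → ℕ) (T : X → ℝ≥0)
    (P : Set X) (p : X) (hp : p ∈ P) :
    GenMinimal L T P p ↔
      ∃ K : ℕ → ℝ≥0 → ℝ≥0, IsGenCostFunction K ∧
        ∀ p' ∈ P, K (L p) (T p) ≤ K (L p') (T p') := by
  constructor
  · intro hmin
    refine ⟨penalizedCost (L p) (T p), isGenCostFunction_penalizedCost, fun p' hp' => ?_⟩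
    by_cases hout : L p < L p' ∨ T p < T p'
    · exact penalizedCost_self_le hout
    · rw [not_or, not_lt, not_lt] at hout
      obtain ⟨hl, ht⟩ := hmin.genLE_of_genLE hp' hout
      exact isGenCostFunction_penalizedCost.le_of_le hl ht
  · rintro ⟨K, hK, hKmin⟩
    exact ⟨hp, fun ⟨p', hp', hlt⟩ => (hKmin p' hp').not_gt (hK.lt_of_genLT hlt)⟩
end

section
/- Let D be a nonempty finite type, let P and Q be probability measures on D with P ≠ Q, and let α, γ be real numbers with 0 < α < γ < 1. Then there exist a natural number N and a function φ : (Fin N → D) → Bool such that the probability of the event {φ = true} under the N-fold product measure P^⊗N is at most α, while its probability under the N-fold product measure Q^⊗N is at least γ. -/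
/-!
Since `P ≠ Q`, some measurable set `s` has `P s < Q s` (if `P s > Q s`, pass to `sᶜ`). The test
counts the samples falling in `s` and rejects when this count exceeds `N` times the midpoint of
`P s` and `Q s`. The count is a sum of `N` i.i.d. indicators, so its variance is at most linear in
`N` while the gap between its two means grows like `N`; by Chebyshev both error probabilities tend
to `0`, and a large enough `N` achieves the bounds `α` and `1 - γ`.
-/

open MeasureTheory ProbabilityTheory Filter Topology

namespace MeasureTheory

theorem exists_measurableSet_measureReal_lt_of_ne {α : Type*} [MeasurableSpace α]
    {μ ν : Measure α} [IsProbabilityMeasure μ] [IsProbabilityMeasure ν] (h : μ ≠ ν) :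
    ∃ s, MeasurableSet s ∧ μ.real s < ν.real s := by
  obtain ⟨s, hs, hne⟩ : ∃ s, MeasurableSet s ∧ μ.real s ≠ ν.real s := by
    contrapose! h
    exact Measure.ext fun s hs =>
      (ENNReal.toReal_eq_toReal_iff' (measure_ne_top μ s) (measure_ne_top ν s)).1 (h s hs)
  rcases hne.lt_or_gt with hlt | hgt
  · exact ⟨s, hs, hlt⟩
  · refine ⟨sᶜ, hs.compl, ?_⟩
    rw [probReal_compl_eq_one_sub hs, probReal_compl_eq_one_sub hs]
    linarith

theorem ofReal_le_prob_of_prob_compl_le {α : Type*} [MeasurableSpace α] {μ : Measure α}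
    [IsProbabilityMeasure μ] {s : Set α} {γ : ℝ} (hγ₀ : 0 ≤ γ) (hγ₁ : γ ≤ 1)
    (h : μ sᶜ ≤ ENNReal.ofReal (1 - γ)) : ENNReal.ofReal γ ≤ μ s := by
  have hcover : ENNReal.ofReal γ + ENNReal.ofReal (1 - γ) ≤ μ s + ENNReal.ofReal (1 - γ) :=
    calc ENNReal.ofReal γ + ENNReal.ofReal (1 - γ) = μ (s ∪ sᶜ) := by
          rw [← ENNReal.ofReal_add hγ₀ (by linarith), Set.union_compl_self, measure_univ]
          simp
      _ ≤ μ s + μ sᶜ := measure_union_le s sᶜ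
      _ ≤ μ s + ENNReal.ofReal (1 - γ) := by gcongr
  exact (ENNReal.add_le_add_iff_right ENNReal.ofReal_ne_top).1 hcover

end MeasureTheory

namespace ProbabilityTheory

variable {α ι : Type*} [MeasurableSpace α] [Fintype ι] {μ : Measure α} [IsProbabilityMeasure μ]
  {f : α → ℝ}

theorem integral_pi_sum_comp_eval (hf : Integrable f μ) :
    ∫ ω, ∑ i, f (ω i) ∂(Measure.pi fun _ : ι => μ) = Fintype.card ι * ∫ x, f x ∂μ := by
  rw [integral_finsetSum _ fun i _ => integrable_comp_eval (μ := fun _ => μ) hf]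
  simp [integral_comp_eval (μ := fun _ => μ) hf.aestronglyMeasurable]

theorem meas_pi_ge_le_card_mul_variance_div_sq (hf : MemLp f 2 μ) {c : ℝ} (hc : 0 < c) :
    (Measure.pi fun _ : ι => μ) {ω | c ≤ |∑ i, f (ω i) - Fintype.card ι * ∫ x, f x ∂μ|}
      ≤ ENNReal.ofReal (Fintype.card ι * variance f μ / c ^ 2) := by
  have hsum : MemLp (∑ i, fun ω : ι → α => f (ω i)) 2 (Measure.pi fun _ => μ) :=
    memLp_finsetSum' _ fun i _ => hf.comp_measurePreserving (measurePreserving_eval _ i)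
  have hmean : (Measure.pi fun _ : ι => μ)[∑ i, fun ω : ι → α => f (ω i)]
      = Fintype.card ι * ∫ x, f x ∂μ := by
    rw [← integral_pi_sum_comp_eval (hf.integrable one_le_two)]
    simp only [Finset.sum_apply]
  have hvar : variance (∑ i, fun ω : ι → α => f (ω i)) (Measure.pi fun _ => μ)
      = Fintype.card ι * variance f μ := by
    simp [variance_sum_pi fun _ => hf]
  have := meas_ge_le_variance_div_sq hsum hc
  rw [hmean, hvar] at this
  simpa only [Finset.sum_apply] using this

theorem tendsto_meas_pi_mul_le_abs_sum_sub (hf : MemLp f 2 μ) {t : ℝ} (ht : 0 < t) :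
    Tendsto (fun N : ℕ => (Measure.pi fun _ : Fin N => μ)
      {ω | N * t ≤ |∑ i, f (ω i) - N * ∫ x, f x ∂μ|}) atTop (𝓝 0) := by
  have hbound : Tendsto (fun N : ℕ => ENNReal.ofReal (variance f μ / t ^ 2 / N)) atTop (𝓝 0) := by
    simpa using ENNReal.tendsto_ofReal (tendsto_const_div_atTop_nhds_zero_nat _)
  refine tendsto_of_tendsto_of_tendsto_of_le_of_le' tendsto_const_nhds hbound
    (Eventually.of_forall fun _ => zero_le) ?_
  filter_upwards [eventually_gt_atTop 0] with N hN
  have hNt : (0 : ℝ) < N * t := by positivity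
  have h := meas_pi_ge_le_card_mul_variance_div_sq (ι := Fin N) hf hNt
  rw [Fintype.card_fin] at h
  refine h.trans_eq (congrArg ENNReal.ofReal ?_)
  field_simp

end ProbabilityTheory

theorem exists_test_separating_general {D : Type*}
    [MeasurableSpace D]
    (P Q : Measure D) [IsProbabilityMeasure P] [IsProbabilityMeasure Q]
    (hPQ : P ≠ Q) (α γ : ℝ) (hα : 0 < α) (hαγ : α < γ) (hγ : γ < 1) :
    ∃ (N : ℕ) (φ : (Fin N → D) → Bool),
      (Measure.pi fun _ : Fin N => P) {ω | φ ω = true} ≤ ENNReal.ofReal α ∧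
      ENNReal.ofReal γ ≤ (Measure.pi fun _ : Fin N => Q) {ω | φ ω = true} := by
  obtain ⟨s, hs, hlt⟩ := exists_measurableSet_measureReal_lt_of_ne hPQ
  set f : D → ℝ := s.indicator 1
  have hf : ∀ μ : Measure D, [IsProbabilityMeasure μ] → MemLp f 2 μ ∧ ∫ x, f x ∂μ = μ.real s :=
    fun μ _ => ⟨memLp_indicator_const 2 hs 1 (Or.inr (measure_ne_top μ s)),
      integral_indicator_one hs⟩
  obtain ⟨t, ht, hmid⟩ : ∃ t, 0 < t ∧ P.real s + t = Q.real s - t :=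
    ⟨(Q.real s - P.real s) / 2, by linarith, by ring⟩
  have hP := (tendsto_meas_pi_mul_le_abs_sum_sub (hf P).1 ht).eventually
    (gt_mem_nhds (ENNReal.ofReal_pos.2 hα))
  have hQ := (tendsto_meas_pi_mul_le_abs_sum_sub (hf Q).1 ht).eventually
    (gt_mem_nhds (ENNReal.ofReal_pos.2 (sub_pos.2 hγ)))
  obtain ⟨N, hPN, hQN⟩ := (hP.and hQ).exists
  rw [(hf P).2] at hPN
  rw [(hf Q).2] at hQN
  refine ⟨N, fun ω => decide (N * (P.real s + t) ≤ ∑ i, f (ω i)), ?_, ?_⟩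
  · refine le_trans (measure_mono fun ω hω => ?_) hPN.le
    simp only [decide_eq_true_eq, Set.mem_ofPred_eq] at hω ⊢
    exact le_abs.2 (Or.inl (by linarith))
  · refine ofReal_le_prob_of_prob_compl_le (by linarith) hγ.le
      (le_trans (measure_mono fun ω hω => ?_) hQN.le)
    simp only [decide_eq_true_eq, Set.mem_compl_iff, Set.mem_ofPred_eq, not_le, hmid] at hω ⊢
    exact le_abs.2 (Or.inr (by linarith))

theorem exists_test_separating {D : Type*} [Fintype D] [Nonempty D]
    [MeasurableSpace D] [MeasurableSingletonClass D]
    (P Q : Measure D) [IsProbabilityMeasure P] [IsProbabilityMeasure Q]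
    (hPQ : P ≠ Q) (α γ : ℝ) (hα : 0 < α) (hαγ : α < γ) (hγ : γ < 1) :
    ∃ (N : ℕ) (φ : (Fin N → D) → Bool),
      (Measure.pi fun _ : Fin N => P) {ω | φ ω = true} ≤ ENNReal.ofReal α ∧
      ENNReal.ofReal γ ≤ (Measure.pi fun _ : Fin N => Q) {ω | φ ω = true} :=
  exists_test_separating_general P Q hPQ α γ hα hαγ hγ
end
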